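/- Let \ell \ge 2, let (c_i)_{i\ge \ell} be complex coefficients, and let A be a complex n-by-n matrix such that \sum_{i\ge \ell} |c_i| \|A\|^i converges, where \|\cdot\| is the operator norm. Set g(\theta) = \sum_{i\ge \ell} |c_i| \theta^i and suppose g(\|A\|) \le tol\,\|A\| for some tol \ge 0. Then for every complex scalar \beta with |\beta| \le 1, the matrix E(\beta A) = \sum_{i\ge \ell} c_i (\beta A)^i satisfies \|E(\beta A)\| \le tol\,\|\beta A\|. -/
import Mathlib


attribute [local instance] Matrix.linftyOpNormedAddCommGroup Matrix.linftyOpNormedRing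
  Matrix.linftyOpNormedAlgebra

/-- Let `ℓ ≥ 2`, let `(c i)_{i≥ℓ}` be complex coefficients (zero below index `ℓ`), and `A` a
complex matrix with `∑_{i≥ℓ} ‖c i‖ ‖A‖^i` convergent for the operator norm.  If
`g(‖A‖) = ∑_{i≥ℓ} ‖c i‖ ‖A‖^i ≤ tol * ‖A‖` with `tol ≥ 0`, then for every `β` with `‖β‖ ≤ 1`
the matrix `E(βA) = ∑_{i≥ℓ} c i • (β • A)^i` satisfies `‖E(βA)‖ ≤ tol * ‖β • A‖`. -/
theorem backward_error_bound_scaled {n : Type*} [Fintype n] [DecidableEq n]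
    (ℓ : ℕ) (hℓ : 2 ≤ ℓ) (c : ℕ → ℂ) (A : Matrix n n ℂ)
    (hc : ∀ i < ℓ, c i = 0)
    (hsum : Summable fun i : ℕ => ‖c i‖ * ‖A‖ ^ i)
    (tol : ℝ) (htol : 0 ≤ tol)
    (hg : (∑' i : ℕ, ‖c i‖ * ‖A‖ ^ i) ≤ tol * ‖A‖) :
    ∀ β : ℂ, ‖β‖ ≤ 1 → ‖∑' i : ℕ, c i • (β • A) ^ i‖ ≤ tol * ‖β • A‖ := by
  intro β hβ
  have hβ0 : 0 ≤ ‖β‖ := norm_nonneg β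
  -- termwise bound
  have key : ∀ i : ℕ, ‖c i • (β • A) ^ i‖ ≤ ‖β‖ * (‖c i‖ * ‖A‖ ^ i) := by
    intro i
    rcases lt_or_ge i ℓ with h | h
    · simp [hc i h]
    · have hi1 : 1 ≤ i := le_trans (le_trans one_le_two hℓ) h
      calc ‖c i • (β • A) ^ i‖ ≤ ‖c i‖ * ‖(β • A) ^ i‖ := norm_smul_le _ _
        _ ≤ ‖c i‖ * ‖β • A‖ ^ i := by
            gcongr
            exact norm_pow_le' _ (lt_of_lt_of_le one_pos hi1)
        _ = ‖c i‖ * (‖β‖ ^ i * ‖A‖ ^ i) := by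
            rw [norm_smul, mul_pow]
        _ ≤ ‖c i‖ * (‖β‖ * ‖A‖ ^ i) := by
            gcongr
            calc ‖β‖ ^ i ≤ ‖β‖ ^ 1 := pow_le_pow_of_le_one hβ0 hβ hi1
              _ = ‖β‖ := pow_one _
        _ = ‖β‖ * (‖c i‖ * ‖A‖ ^ i) := by ring
  have hsum' : Summable fun i : ℕ => ‖β‖ * (‖c i‖ * ‖A‖ ^ i) := hsum.mul_left _
  have hsum2 : Summable fun i : ℕ => ‖c i • (β • A) ^ i‖ :=
    Summable.of_nonneg_of_le (fun i => norm_nonneg _) key hsum'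
  calc ‖∑' i : ℕ, c i • (β • A) ^ i‖ ≤ ∑' i : ℕ, ‖c i • (β • A) ^ i‖ :=
        norm_tsum_le_tsum_norm hsum2
    _ ≤ ∑' i : ℕ, ‖β‖ * (‖c i‖ * ‖A‖ ^ i) := Summable.tsum_le_tsum key hsum2 hsum'
    _ = ‖β‖ * ∑' i : ℕ, ‖c i‖ * ‖A‖ ^ i := tsum_mul_left
    _ ≤ ‖β‖ * (tol * ‖A‖) := by
        apply mul_le_mul_of_nonneg_left hg hβ0
    _ = tol * ‖β • A‖ := by rw [norm_smul]; ring
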